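/- Let B be a Banach space, Λ > 0, and let (U(τ,σ))_{0 ≤ σ ≤ τ ≤ Λ} be an evolution system of bounded linear operators on B: U(σ,σ) = I, U(τ,σ) ∘ U(σ,ρ) = U(τ,ρ) for ρ ≤ σ ≤ τ, and (τ,σ) ↦ U(τ,σ)x is continuous for each x ∈ B. For each τ ∈ [0,Λ] let F_τ : [0,∞) → L(B) satisfy F_τ(0) = I and ‖F_τ(ρ)‖ ≤ e^{ωρ} for all ρ ≥ 0 with ω ≥ 0 independent of τ. Suppose there is a dense subspace D ⊆ B such that for every v ∈ D and every σ ∈ [0,Λ): (i) τ ↦ U(τ,σ)v is continuously differentiable on [σ,Λ]; (ii) for every τ, the strong right derivative F_τ'(0)(U(τ,σ)v) := lim_{s↓0}(F_τ(s)U(τ,σ)v − U(τ,σ)v)/s exists and equals ∂_τ U(τ,σ)v; and (iii) lim_{ρ↓0} sup_{τ ∈ (σ,Λ)} ‖ (F_τ(ρ)U(τ,σ)v − U(τ,σ)v)/ρ − F_τ'(0)U(τ,σ)v ‖ = 0. Then for all 0 ≤ σ ≤ τ ≤ Λ and x ∈ B, U(τ,σ)x = lim_{m→∞} F_{σ+(m-1)(τ−σ)/m}((τ−σ)/m)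 ∘ ⋯ ∘ F_{σ+(τ−σ)/m}((τ−σ)/m) ∘ F_{σ}((τ−σ)/m) x (the product taken with later time parameters applied last). -/

import Mathlib

open Filter Topology Set Real

/-- The Chernoff-type product `F (σ+(m-1)h) h ∘ ⋯ ∘ F (σ+h) h ∘ F σ h`,
with later time parameters applied last (i.e. composed on the outside). -/
noncomputable def chernoffProd {B : Type*} [NormedAddCommGroup B] [NormedSpace ℝ B]
    (F : ℝ → ℝ → B →L[ℝ] B) (σ h : ℝ) : ℕ → (B →L[ℝ] B)
  | 0 => 1
  | (m + 1) => (F (σ + (m : ℝ) * h) h).comp (chernoffProd F σ h m)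

private lemma chernoffProd_norm_le {B : Type*} [NormedAddCommGroup B] [NormedSpace ℝ B]
    (F : ℝ → ℝ → B →L[ℝ] B) (Λ ω : ℝ)
    (hFgrowth : ∀ τ : ℝ, τ ∈ Icc (0 : ℝ) Λ → ∀ ρ : ℝ, 0 ≤ ρ →
      ‖F τ ρ‖ ≤ exp (ω * ρ))
    (σ h : ℝ) (hh : 0 ≤ h) :
    ∀ n : ℕ, (∀ k : ℕ, k < n → σ + (k : ℝ) * h ∈ Icc (0 : ℝ) Λ) →
      ‖chernoffProd F σ h n‖ ≤ exp (ω * (n * h)) := by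
  intro n
  induction n with
  | zero =>
      intro _
      have h1 : ‖(1 : B →L[ℝ] B)‖ ≤ 1 := ContinuousLinearMap.norm_id_le
      simpa [chernoffProd] using h1.trans (by simp [Real.exp_nonneg])
  | succ n ih =>
      intro hmem
      have h1 : ‖chernoffProd F σ h n‖ ≤ exp (ω * (n * h)) :=
        ih fun k hk => hmem k (hk.trans (Nat.lt_succ_self n))
      have h2 : ‖F (σ + (n : ℝ) * h) h‖ ≤ exp (ω * h) :=
        hFgrowth _ (hmem n (Nat.lt_succ_self n)) h hh
      calc ‖chernoffProd F σ h (n + 1)‖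
          ≤ ‖F (σ + (n : ℝ) * h) h‖ * ‖chernoffProd F σ h n‖ :=
            ContinuousLinearMap.opNorm_comp_le _ _
        _ ≤ exp (ω * h) * exp (ω * (n * h)) :=
            mul_le_mul h2 h1 (norm_nonneg _) (Real.exp_nonneg _)
        _ = exp (ω * (((n + 1 : ℕ) : ℝ) * h)) := by
            rw [← Real.exp_add]; push_cast; ring_nf

set_option maxHeartbeats 1000000 in
/-- **Time-dependent Trotter–Chernoff product formula** (Vuillermot).
Let `U (τ, σ)`, `0 ≤ σ ≤ τ ≤ Λ`, be an evolution system on a Banach space `B`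
and, for each `τ`, let `F τ : [0,∞) → L(B)` satisfy `F τ 0 = 1` and
`‖F τ ρ‖ ≤ exp (ω ρ)` with `ω ≥ 0` independent of `τ`.  Suppose there is a
dense subspace `D ⊆ B` such that for every `v ∈ D` and `σ ∈ [0,Λ)` the map
`τ ↦ U τ σ v` is continuously differentiable on `[σ,Λ]`, its derivative at `τ`
equals the strong right derivative `F_τ'(0)` applied to `U τ σ v`, and the
corresponding difference quotients converge uniformly in `τ ∈ (σ,Λ)`.  Then
`U τ σ x` is the limit of the products
`F (σ+(m-1)(τ-σ)/m) ((τ-σ)/m) ∘ ⋯ ∘ F σ ((τ-σ)/m)` applied to `x`. -/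
theorem time_dependent_trotter_chernoff
    {B : Type*} [NormedAddCommGroup B] [NormedSpace ℝ B] [CompleteSpace B]
    (Λ : ℝ) (hΛ : 0 < Λ)
    (U : ℝ → ℝ → B →L[ℝ] B)
    (hUid : ∀ σ : ℝ, σ ∈ Icc (0 : ℝ) Λ → U σ σ = 1)
    (hUcocycle : ∀ ρ σ τ : ℝ, 0 ≤ ρ → ρ ≤ σ → σ ≤ τ → τ ≤ Λ →
      (U τ σ).comp (U σ ρ) = U τ ρ)
    (hUcont : ∀ x : B,
      ContinuousOn (fun p : ℝ × ℝ => U p.1 p.2 x)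
        {p : ℝ × ℝ | 0 ≤ p.2 ∧ p.2 ≤ p.1 ∧ p.1 ≤ Λ})
    (F : ℝ → ℝ → B →L[ℝ] B)
    (hF0 : ∀ τ : ℝ, τ ∈ Icc (0 : ℝ) Λ → F τ 0 = 1)
    (ω : ℝ) (hω : 0 ≤ ω)
    (hFgrowth : ∀ τ : ℝ, τ ∈ Icc (0 : ℝ) Λ → ∀ ρ : ℝ, 0 ≤ ρ →
      ‖F τ ρ‖ ≤ exp (ω * ρ))
    (D : Submodule ℝ B) (hD : Dense (D : Set B))
    (hcore : ∀ v ∈ D, ∀ σ ∈ Ico (0 : ℝ) Λ,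
      ∃ U' : ℝ → B,
        -- (i) `τ ↦ U τ σ v` is continuously differentiable on `[σ, Λ]`
        ContinuousOn U' (Icc σ Λ) ∧
        (∀ τ ∈ Icc σ Λ, HasDerivWithinAt (fun t => U t σ v) (U' τ) (Icc σ Λ) τ) ∧
        -- (ii) the strong right derivative `F_τ'(0)` of `F τ` exists at
        -- `U τ σ v` and equals the derivative `∂_τ U τ σ v`
        (∀ τ ∈ Icc σ Λ,
          Tendsto (fun s : ℝ => s⁻¹ • (F τ s (U τ σ v) - U τ σ v))
            (𝓝[>] 0) (𝓝 (U' τ))) ∧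
        -- (iii) uniform (in `τ ∈ (σ, Λ)`) convergence of the difference quotients
        (∀ ε : ℝ, 0 < ε → ∃ δ : ℝ, 0 < δ ∧ ∀ ρ : ℝ, 0 < ρ → ρ < δ →
          ∀ τ ∈ Ioo σ Λ,
            ‖ρ⁻¹ • (F τ ρ (U τ σ v) - U τ σ v) - U' τ‖ < ε)) :
    ∀ σ τ : ℝ, 0 ≤ σ → σ ≤ τ → τ ≤ Λ → ∀ x : B,
      Tendsto (fun m : ℕ => chernoffProd F σ ((τ - σ) / m) m x)
        atTop (𝓝 (U τ σ x)) := by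
  intro σ τ hσ hστ hτ x
  rcases hστ.eq_or_lt with rfl | hlt
  · -- trivial case τ = σ
    have hmem : σ ∈ Icc (0 : ℝ) Λ := ⟨hσ, hτ⟩
    have hzero : ∀ m : ℕ, chernoffProd F σ 0 m x = x := by
      intro m
      induction m with
      | zero => simp [chernoffProd]
      | succ m ih =>
          simp [chernoffProd, hF0 σ hmem, ih]
    have hconst : ∀ m : ℕ, chernoffProd F σ ((σ - σ) / (m : ℝ)) m x = x := by
      intro m; rw [sub_self, zero_div]; exact hzero m
    have hU1 : U σ σ x = x := by rw [hUid σ hmem]; rfl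
    simp only [hconst, hU1]
    exact tendsto_const_nhds
  · -- main case σ < τ
    have hσΛ : σ < Λ := lt_of_lt_of_le hlt hτ
    set T : ℝ := τ - σ with hTdef
    have hT : 0 < T := sub_pos.mpr hlt
    have hTΛ : T ≤ Λ := by rw [hTdef]; linarith
    -- uniform bound on the products
    have hbound : ∀ m : ℕ, ‖chernoffProd F σ (T / m) m‖ ≤ exp (ω * Λ) := by
      intro m
      rcases Nat.eq_zero_or_pos m with rfl | hm
      · have h1 : ‖(1 : B →L[ℝ] B)‖ ≤ 1 := ContinuousLinearMap.norm_id_le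
        calc ‖chernoffProd F σ (T / ((0 : ℕ) : ℝ)) 0‖ = ‖(1 : B →L[ℝ] B)‖ := rfl
          _ ≤ 1 := h1
          _ ≤ exp (ω * Λ) := Real.one_le_exp (by positivity)
      · have hm0 : (0 : ℝ) < m := by exact_mod_cast hm
        have hh : 0 ≤ T / m := by positivity
        have hmT : (m : ℝ) * (T / m) = T := by field_simp
        have hmemk : ∀ k : ℕ, k < m → σ + (k : ℝ) * (T / m) ∈ Icc (0 : ℝ) Λ := by
          intro k hk
          constructor
          · exact add_nonneg hσ (by positivity)
          · have hk' : (k : ℝ) ≤ m := by exact_mod_cast hk.le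
            have h2 : (k : ℝ) * (T / m) ≤ (m : ℝ) * (T / m) :=
              mul_le_mul_of_nonneg_right hk' hh
            rw [hmT] at h2
            have : σ + T = τ := by rw [hTdef]; ring
            linarith
        have := chernoffProd_norm_le F Λ ω hFgrowth σ (T / m) hh m hmemk
        refine this.trans (Real.exp_le_exp.mpr ?_)
        rw [hmT]
        exact mul_le_mul_of_nonneg_left hTΛ hω
    -- convergence on the core D
    have key : ∀ v ∈ D, Tendsto (fun m : ℕ => chernoffProd F σ (T / m) m v)
        atTop (𝓝 (U τ σ v)) := by
      intro v hv
      obtain ⟨U', hU'cont, hU'deriv, hU'right, hU'unif⟩ := hcore v hv σ ⟨hσ, hσΛ⟩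
      rw [Metric.tendsto_atTop]
      intro ε hε
      have hden : (0 : ℝ) < 2 * T * exp (ω * T) + 1 := by
        nlinarith [Real.exp_pos (ω * T), hT]
      set ε' : ℝ := ε / (2 * T * exp (ω * T) + 1) with hε'def
      have hε' : 0 < ε' := div_pos hε hden
      obtain ⟨δ₁, hδ₁, hδ₁p⟩ := hU'unif ε' hε'
      have hσmem : σ ∈ Icc σ Λ := ⟨le_refl σ, hσΛ.le⟩
      obtain ⟨δ₂, hδ₂, hδ₂p⟩ :=
        Metric.tendsto_nhdsWithin_nhds.mp (hU'right σ hσmem) ε' hε'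
      have hUC : UniformContinuousOn U' (Icc σ Λ) :=
        isCompact_Icc.uniformContinuousOn_of_continuous hU'cont
      obtain ⟨δ₃, hδ₃, hδ₃p⟩ := Metric.uniformContinuousOn_iff.mp hUC ε' hε'
      set δ : ℝ := min δ₁ (min δ₂ δ₃) with hδdef
      have hδ : 0 < δ := lt_min hδ₁ (lt_min hδ₂ hδ₃)
      obtain ⟨N₀, hN₀⟩ :=
        Metric.tendsto_atTop.mp (tendsto_const_div_atTop_nhds_zero_nat T) δ hδ
      refine ⟨max N₀ 1, fun m hm => ?_⟩
      have hm1 : 1 ≤ m := le_trans (le_max_right _ _) hm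
      have hm0 : (0 : ℝ) < m := by exact_mod_cast hm1
      set h : ℝ := T / m with hhdef
      have hh0 : 0 < h := by rw [hhdef]; positivity
      have hhδ : h < δ := by
        have := hN₀ m (le_trans (le_max_left _ _) hm)
        rwa [Real.dist_eq, sub_zero, abs_of_pos hh0] at this
      have hmh : (m : ℝ) * h = T := by rw [hhdef]; field_simp
      have hquot : ∀ t : ℝ,
          ‖h⁻¹ • (F t h (U t σ v) - U t σ v) - U' t‖ < ε' →
          ‖F t h (U t σ v) - U t σ v - h • U' t‖ ≤ h * ε' := by
        intro t hlt'
        have heq : F t h (U t σ v) - U t σ v - h • U' t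
            = h • (h⁻¹ • (F t h (U t σ v) - U t σ v) - U' t) := by
          rw [smul_sub, smul_smul, mul_inv_cancel₀ (ne_of_gt hh0), one_smul]
        rw [heq, norm_smul, Real.norm_eq_abs, abs_of_pos hh0]
        exact mul_le_mul_of_nonneg_left hlt'.le hh0.le
      have main : ∀ n : ℕ, n ≤ m →
          ‖chernoffProd F σ h n v - U (σ + (n : ℝ) * h) σ v‖
            ≤ exp (ω * ((n : ℝ) * h)) * ((n : ℝ) * (2 * h * ε')) := by
        intro n
        induction n with
        | zero =>
            intro _
            have hU0 : U σ σ v = v := by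
              rw [hUid σ ⟨hσ, hσΛ.le⟩]; rfl
            simp [chernoffProd, hU0]
        | succ n ih =>
            intro hnm
            have hn_le : n ≤ m := le_trans (Nat.le_succ n) hnm
            have hn1m : ((n : ℝ) + 1) ≤ m := by exact_mod_cast hnm
            push_cast
            set t : ℝ := σ + (n : ℝ) * h with htdef
            have hσt : σ ≤ t := le_add_of_nonneg_right (by positivity)
            have hthτ : t + h ≤ τ := by
              have h2 : ((n : ℝ) + 1) * h ≤ (m : ℝ) * h :=
                mul_le_mul_of_nonneg_right hn1m hh0.le
              rw [hmh] at h2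
              have : σ + T = τ := by rw [hTdef]; ring
              rw [htdef]; nlinarith
            have htΛ : t ≤ Λ := by linarith
            have ht0 : 0 ≤ t := le_trans hσ hσt
            have htmem : t ∈ Icc σ Λ := ⟨hσt, htΛ⟩
            have hteq : σ + ((n : ℝ) + 1) * h = t + h := by rw [htdef]; ring
            rw [hteq]
            -- the three-term decomposition
            have heqm : chernoffProd F σ h (n + 1) v - U (t + h) σ v
                = F t h (chernoffProd F σ h n v - U t σ v)
                  + (F t h (U t σ v) - U t σ v - h • U' t)
                  - (U (t + h) σ v - U t σ v - h • U' t) := by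
              have hd : chernoffProd F σ h (n + 1) v
                  = F t h (chernoffProd F σ h n v) := rfl
              rw [hd, map_sub]; abel
            -- term B
            have hBa : ‖h⁻¹ • (F t h (U t σ v) - U t σ v) - U' t‖ < ε' := by
              rcases Nat.eq_zero_or_pos n with rfl | hn
              · have ht : t = σ := by rw [htdef]; norm_num
                have hd2 : dist h (0 : ℝ) < δ₂ := by
                  rw [Real.dist_eq, sub_zero, abs_of_pos hh0]
                  exact lt_of_lt_of_le hhδ ((min_le_right _ _).trans (min_le_left _ _))
                have := hδ₂p (mem_Ioi.mpr hh0) hd2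
                rw [dist_eq_norm] at this
                rw [ht]
                exact this
              · have hn1 : (1 : ℝ) ≤ n := by exact_mod_cast hn
                have htIoo : t ∈ Ioo σ Λ := by
                  constructor
                  · rw [htdef]; nlinarith
                  · have : t < τ := by linarith
                    linarith
                exact hδ₁p h hh0 (lt_of_lt_of_le hhδ (min_le_left _ _)) t htIoo
            have hB : ‖F t h (U t σ v) - U t σ v - h • U' t‖ ≤ h * ε' := hquot t hBa
            -- term C (mean value inequality)
            have hC : ‖U (t + h) σ v - U t σ v - h • U' t‖ ≤ ε' * h := by
              have hsub : Icc t (t + h) ⊆ Icc σ Λ := Icc_subset_Icc hσt (by linarith)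
              have hderiv : ∀ s ∈ Icc t (t + h),
                  HasDerivWithinAt (fun s => U s σ v - s • U' t)
                    (U' s - U' t) (Icc t (t + h)) s := by
                intro s hs
                have h1 := (hU'deriv s (hsub hs)).mono hsub
                have h2 : HasDerivWithinAt (fun y : ℝ => y • U' t)
                    ((1 : ℝ) • U' t) (Icc t (t + h)) s :=
                  (hasDerivWithinAt_id s _).smul_const (U' t)
                rw [one_smul] at h2
                exact h1.sub h2
              have hbd : ∀ s ∈ Icc t (t + h), ‖U' s - U' t‖ ≤ ε' := by
                intro s hs
                have hd : dist s t < δ₃ := by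
                  rw [Real.dist_eq, abs_of_nonneg (by linarith [hs.1])]
                  have : s - t ≤ h := by linarith [hs.2]
                  have hδ3 : h < δ₃ :=
                    lt_of_lt_of_le hhδ ((min_le_right _ _).trans (min_le_right _ _))
                  linarith
                have := hδ₃p s (hsub hs) t htmem hd
                rw [dist_eq_norm] at this
                exact this.le
              have hmvt := Convex.norm_image_sub_le_of_norm_hasDerivWithin_le hderiv hbd
                (convex_Icc t (t + h)) (left_mem_Icc.mpr (by linarith))
                (right_mem_Icc.mpr (by linarith))
              have hnorm : ‖(t + h) - t‖ = h := by
                rw [add_sub_cancel_left, Real.norm_eq_abs, abs_of_pos hh0]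
              have heq2 : U (t + h) σ v - (t + h) • U' t - (U t σ v - t • U' t)
                  = U (t + h) σ v - U t σ v - h • U' t := by
                rw [add_smul]; abel
              rw [heq2, hnorm] at hmvt
              exact hmvt
            -- assemble
            have hFt : ‖F t h‖ ≤ exp (ω * h) := hFgrowth t ⟨ht0, htΛ⟩ h hh0.le
            have hA : ‖F t h (chernoffProd F σ h n v - U t σ v)‖
                ≤ exp (ω * h) * (exp (ω * ((n : ℝ) * h)) * ((n : ℝ) * (2 * h * ε'))) := by
              calc ‖F t h (chernoffProd F σ h n v - U t σ v)‖
                  ≤ ‖F t h‖ * ‖chernoffProd F σ h n v - U t σ v‖ :=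
                    (F t h).le_opNorm _
                _ ≤ exp (ω * h) * (exp (ω * ((n : ℝ) * h)) * ((n : ℝ) * (2 * h * ε'))) :=
                    mul_le_mul hFt (ih hn_le) (norm_nonneg _) (Real.exp_nonneg _)
            have hexp : exp (ω * h) * exp (ω * ((n : ℝ) * h))
                = exp (ω * (((n : ℝ) + 1) * h)) := by
              rw [← Real.exp_add]; ring_nf
            have hA' : ‖F t h (chernoffProd F σ h n v - U t σ v)‖
                ≤ exp (ω * (((n : ℝ) + 1) * h)) * ((n : ℝ) * (2 * h * ε')) := by
              rw [← hexp, mul_assoc]; exact hA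
            have hE1 : (1 : ℝ) ≤ exp (ω * (((n : ℝ) + 1) * h)) := by
              apply Real.one_le_exp
              have : (0 : ℝ) ≤ (n : ℝ) + 1 := by positivity
              positivity
            have hstep : ‖chernoffProd F σ h (n + 1) v - U (t + h) σ v‖
                ≤ exp (ω * (((n : ℝ) + 1) * h)) * ((n : ℝ) * (2 * h * ε')) + h * ε' + ε' * h := by
              rw [heqm]
              have t1 := norm_sub_le
                (F t h (chernoffProd F σ h n v - U t σ v)
                  + (F t h (U t σ v) - U t σ v - h • U' t))
                (U (t + h) σ v - U t σ v - h • U' t)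
              have t2 := norm_add_le (F t h (chernoffProd F σ h n v - U t σ v))
                (F t h (U t σ v) - U t σ v - h • U' t)
              linarith
            refine hstep.trans ?_
            have hX : h * ε' + ε' * h ≤ exp (ω * (((n : ℝ) + 1) * h)) * (2 * h * ε') := by
              have h1 : 2 * h * ε' ≤ exp (ω * (((n : ℝ) + 1) * h)) * (2 * h * ε') :=
                le_mul_of_one_le_left (by positivity) hE1
              have h2 : h * ε' + ε' * h = 2 * h * ε' := by ring
              linarith
            have hring : exp (ω * (((n : ℝ) + 1) * h)) * (((n : ℝ) + 1) * (2 * h * ε'))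
                = exp (ω * (((n : ℝ) + 1) * h)) * ((n : ℝ) * (2 * h * ε'))
                  + exp (ω * (((n : ℝ) + 1) * h)) * (2 * h * ε') := by ring
            linarith
      -- conclude from n = m
      have hτeq : σ + (m : ℝ) * h = τ := by rw [hmh, hTdef]; ring
      have hmain := main m le_rfl
      rw [hτeq] at hmain
      rw [dist_eq_norm]
      refine lt_of_le_of_lt hmain ?_
      have h1 : (m : ℝ) * (2 * h * ε') = 2 * T * ε' := by rw [← hmh]; ring
      rw [hmh, h1]
      have h2 : ε' * (2 * T * exp (ω * T) + 1) = ε := by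
        rw [hε'def]; field_simp
      nlinarith [hε', Real.exp_pos (ω * T), hT]
    -- density argument
    rw [Metric.tendsto_atTop]
    intro ε hε
    set K : ℝ := exp (ω * Λ) + ‖U τ σ‖ + 1 with hKdef
    have hK : 0 < K := by positivity
    have hKne : K ≠ 0 := hK.ne'
    obtain ⟨v, hvD, hvx⟩ := Metric.mem_closure_iff.mp (hD x) (ε / (3 * K)) (by positivity)
    obtain ⟨N, hN⟩ := Metric.tendsto_atTop.mp (key v hvD) (ε / 3) (by positivity)
    refine ⟨N, fun m hm => ?_⟩
    have hPm := hbound m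
    have hxv : ‖x - v‖ < ε / (3 * K) := by rwa [← dist_eq_norm]
    have hKε : K * (ε / (3 * K)) = ε / 3 := by field_simp
    have e1 : ‖chernoffProd F σ (T / m) m (x - v)‖ < ε / 3 := by
      calc ‖chernoffProd F σ (T / m) m (x - v)‖
          ≤ ‖chernoffProd F σ (T / m) m‖ * ‖x - v‖ :=
            (chernoffProd F σ (T / m) m).le_opNorm _
        _ ≤ K * ‖x - v‖ := by
            apply mul_le_mul_of_nonneg_right _ (norm_nonneg _)
            rw [hKdef]; linarith [norm_nonneg (U τ σ)]
        _ < K * (ε / (3 * K)) := mul_lt_mul_of_pos_left hxv hK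
        _ = ε / 3 := hKε
    have e3 : ‖U τ σ (v - x)‖ < ε / 3 := by
      have hvx' : ‖v - x‖ < ε / (3 * K) := by rwa [norm_sub_rev]
      calc ‖U τ σ (v - x)‖ ≤ ‖U τ σ‖ * ‖v - x‖ := (U τ σ).le_opNorm _
        _ ≤ K * ‖v - x‖ := by
            apply mul_le_mul_of_nonneg_right _ (norm_nonneg _)
            rw [hKdef]; linarith [Real.exp_nonneg (ω * Λ)]
        _ < K * (ε / (3 * K)) := mul_lt_mul_of_pos_left hvx' hK
        _ = ε / 3 := hKε
    have e2 : ‖chernoffProd F σ (T / m) m v - U τ σ v‖ < ε / 3 := by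
      have := hN m hm
      rwa [dist_eq_norm] at this
    rw [dist_eq_norm]
    have hsplit : chernoffProd F σ (T / m) m x - U τ σ x
        = chernoffProd F σ (T / m) m (x - v)
          + (chernoffProd F σ (T / m) m v - U τ σ v) + U τ σ (v - x) := by
      simp only [map_sub]; abel
    rw [hsplit]
    have t1 := norm_add_le
      (chernoffProd F σ (T / m) m (x - v)
        + (chernoffProd F σ (T / m) m v - U τ σ v)) (U τ σ (v - x))
    have t2 := norm_add_le (chernoffProd F σ (T / m) m (x - v))
      (chernoffProd F σ (T / m) m v - U τ σ v)
    linarith
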